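/- arXiv:1701.02302 — 2 statements merged into one kernel-verified Lean document; each statement's English description precedes it below -/
import Mathlib

section
/- Let n ≥ 1 and let C be a class of functions [n] → [2] with C nonempty and C not equal to the class of all functions [n] → [2]. Then C has at least one extenture, and (max{k ∈ ℕ : C shatters every subset U ⊆ [n] with |U| = k}) + 1 = min{|dom(𝕡f)| : 𝕡f is an extenture of C}. (The VC radius of C equals the minimum domain size of an extenture of C minus one.) -/
/-!
Let `m` be the least domain size of a partial function with no extension in `C`; it exists
because `C` misses some total function, and `m ≥ 1` because `C ≠ ∅`. Such a partial function
of size `m` is an extenture, since its proper restrictions are smaller, and every extenture has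
no extension, so `m` is the minimal size of an extenture. A set `U` with `|U| < m` is shattered,
as every assignment on `U` is a partial function of size `< m`; a set with `|U| ≥ m` may be
chosen to contain the domain of an unextendable partial function, and is then not shattered.
-/

/-- A total function `f : Fin n → Fin 2` extends the partial function `pf`. -/
def ExtendsPF {n : ℕ} (f : Fin n → Fin 2) (pf : Fin n → Option (Fin 2)) : Prop :=
  ∀ u i, pf u = some i → f u = i

/-- `pf` is an extenture of `C`: no member of `C` extends `pf`, but every proper
restriction of `pf` has an extension in `C`. -/
def IsExtenture {n : ℕ} (C : Set (Fin n → Fin 2)) (pf : Fin n → Option (Fin 2)) : Prop :=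
  (¬ ∃ f ∈ C, ExtendsPF f pf) ∧
  ∀ pg : Fin n → Option (Fin 2),
    (∀ u i, pg u = some i → pf u = some i) → pg ≠ pf → ∃ f ∈ C, ExtendsPF f pg

/-- `C` shatters `U`: every assignment of values on `U` is realized by a member of `C`. -/
def Shatters {n : ℕ} (C : Set (Fin n → Fin 2)) (U : Finset (Fin n)) : Prop :=
  ∀ g : Fin n → Fin 2, ∃ f ∈ C, ∀ u ∈ U, f u = g u

/-- The size of the domain of a partial function. -/
def domCard {n : ℕ} (pf : Fin n → Option (Fin 2)) : ℕ :=
  (Finset.univ.filter (fun u => (pf u).isSome = true)).card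

open Finset

section PartialFunctions

variable {n : ℕ}

def pfDom (pf : Fin n → Option (Fin 2)) : Finset (Fin n) :=
  univ.filter fun u => (pf u).isSome

@[simp]
theorem mem_pfDom {pf : Fin n → Option (Fin 2)} {u : Fin n} :
    u ∈ pfDom pf ↔ (pf u).isSome := by
  simp [pfDom]

theorem domCard_eq_card_pfDom (pf : Fin n → Option (Fin 2)) : domCard pf = #(pfDom pf) := rfl

theorem domCard_le (pf : Fin n → Option (Fin 2)) : domCard pf ≤ n :=
  (card_filter_le _ _).trans_eq (card_fin n)

theorem extendsPF_of_domCard_eq_zero {pf : Fin n → Option (Fin 2)} (h : domCard pf = 0)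
    (f : Fin n → Fin 2) : ExtendsPF f pf := by
  intro u i hi
  have hempty : pfDom pf = ∅ := card_eq_zero.mp h
  have hu : u ∈ pfDom pf := by simp [hi]
  simp [hempty] at hu

theorem domCard_lt_of_restrict {pf pg : Fin n → Option (Fin 2)}
    (hsub : ∀ u i, pg u = some i → pf u = some i) (hne : pg ≠ pf) :
    domCard pg < domCard pf := by
  have hdom : pfDom pg ⊆ pfDom pf := fun u hu => by
    obtain ⟨i, hi⟩ := Option.isSome_iff_exists.mp (mem_pfDom.mp hu)
    simp [hsub u i hi]
  refine card_lt_card ⟨hdom, fun hsup => hne (funext fun u => ?_)⟩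
  cases hg : pg u with
  | some i => exact (hsub u i hg).symm
  | none =>
    by_contra hf
    have : u ∈ pfDom pg := hsup (by simpa [Option.isSome_iff_ne_none] using Ne.symm hf)
    simp [hg] at this

def restrictPF (g : Fin n → Fin 2) (U : Finset (Fin n)) : Fin n → Option (Fin 2) :=
  fun u => if u ∈ U then some (g u) else none

theorem domCard_restrictPF (g : Fin n → Fin 2) (U : Finset (Fin n)) :
    domCard (restrictPF g U) = #U := by
  rw [domCard_eq_card_pfDom]
  congr 1
  ext u
  by_cases h : u ∈ U <;> simp [restrictPF, h]

theorem extendsPF_restrictPF_iff {f g : Fin n → Fin 2} {U : Finset (Fin n)} :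
    ExtendsPF f (restrictPF g U) ↔ ∀ u ∈ U, f u = g u := by
  refine ⟨fun h u hu => h u (g u) (by simp [restrictPF, hu]), fun h u i hi => ?_⟩
  by_cases hu : u ∈ U
  · simp only [restrictPF, hu, if_true, Option.some.injEq] at hi
    exact hi ▸ h u hu
  · simp [restrictPF, hu] at hi

theorem Shatters.exists_extendsPF {C : Set (Fin n → Fin 2)} {U : Finset (Fin n)}
    (hU : Shatters C U) {pf : Fin n → Option (Fin 2)} (hdom : pfDom pf ⊆ U) :
    ∃ f ∈ C, ExtendsPF f pf := by
  obtain ⟨f, hf, hfU⟩ := hU fun u => (pf u).getD 0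
  refine ⟨f, hf, fun u i hi => ?_⟩
  rw [hfU u (hdom (by simp [hi])), hi, Option.getD_some]

end PartialFunctions

section MinimalUnextendable

variable {n : ℕ} {C : Set (Fin n → Fin 2)}

def unextendableSizes (C : Set (Fin n → Fin 2)) : Set ℕ :=
  {k | ∃ pf : Fin n → Option (Fin 2), (¬ ∃ f ∈ C, ExtendsPF f pf) ∧ domCard pf = k}

theorem unextendableSizes_nonempty (hproper : C ≠ Set.univ) :
    (unextendableSizes C).Nonempty := by
  obtain ⟨g, hg⟩ := (Set.ne_univ_iff_exists_notMem C).mp hproper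
  refine ⟨_, fun u => some (g u), ?_, rfl⟩
  rintro ⟨f, hf, hfg⟩
  exact hg (funext (fun u => hfg u (g u) rfl) ▸ hf)

theorem exists_extendsPF_of_domCard_lt {pf : Fin n → Option (Fin 2)}
    (h : domCard pf < sInf (unextendableSizes C)) : ∃ f ∈ C, ExtendsPF f pf := by
  by_contra hno
  exact Nat.notMem_of_lt_sInf h ⟨pf, hno, rfl⟩

theorem isExtenture_of_domCard_eq_sInf {pf : Fin n → Option (Fin 2)}
    (hpf : ¬ ∃ f ∈ C, ExtendsPF f pf) (hcard : domCard pf = sInf (unextendableSizes C)) :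
    IsExtenture C pf :=
  ⟨hpf, fun _ hsub hne =>
    exists_extendsPF_of_domCard_lt (hcard ▸ domCard_lt_of_restrict hsub hne)⟩

theorem one_le_sInf_unextendableSizes (hne : C.Nonempty) (hproper : C ≠ Set.univ) :
    1 ≤ sInf (unextendableSizes C) := by
  obtain ⟨f, hf⟩ := hne
  obtain ⟨pf, hpf, hcard⟩ := Nat.sInf_mem (unextendableSizes_nonempty hproper)
  refine Nat.one_le_iff_ne_zero.mpr fun h0 => hpf ⟨f, hf, ?_⟩
  exact extendsPF_of_domCard_eq_zero (hcard.trans h0) f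

theorem sInf_extentureSizes_eq (hproper : C ≠ Set.univ) :
    sInf {k | ∃ pf : Fin n → Option (Fin 2), IsExtenture C pf ∧ domCard pf = k}
      = sInf (unextendableSizes C) := by
  obtain ⟨pf, hpf, hcard⟩ := Nat.sInf_mem (unextendableSizes_nonempty hproper)
  have hext := isExtenture_of_domCard_eq_sInf hpf hcard
  refine le_antisymm (hcard ▸ Nat.sInf_le ⟨pf, hext, rfl⟩) ?_
  exact le_csInf ⟨_, pf, hext, rfl⟩ fun k ⟨pg, hpg, hk⟩ => Nat.sInf_le ⟨pg, hpg.1, hk⟩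

theorem shatters_of_card_lt {U : Finset (Fin n)} (hU : #U < sInf (unextendableSizes C)) :
    Shatters C U := fun g => by
  obtain ⟨f, hf, hfg⟩ :=
    exists_extendsPF_of_domCard_lt (pf := restrictPF g U) ((domCard_restrictPF g U).symm ▸ hU)
  exact ⟨f, hf, extendsPF_restrictPF_iff.mp hfg⟩

theorem exists_card_eq_not_shatters (hproper : C ≠ Set.univ) {k : ℕ}
    (hk : sInf (unextendableSizes C) ≤ k) (hkn : k ≤ n) :
    ∃ U : Finset (Fin n), #U = k ∧ ¬ Shatters C U := by
  obtain ⟨pf, hpf, hcard⟩ := Nat.sInf_mem (unextendableSizes_nonempty hproper)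
  obtain ⟨U, hdomU, hU⟩ := exists_superset_card_eq (s := pfDom pf) (n := k)
    (by rwa [← domCard_eq_card_pfDom, hcard]) (by simpa using hkn)
  exact ⟨U, hU, fun hshat => hpf (hshat.exists_extendsPF hdomU)⟩

theorem shatteredSizes_eq_Iic (hne : C.Nonempty) (hproper : C ≠ Set.univ) :
    {k | (∃ U : Finset (Fin n), #U = k) ∧ ∀ U : Finset (Fin n), #U = k → Shatters C U}
      = Set.Iic (sInf (unextendableSizes C) - 1) := by
  have hpos := one_le_sInf_unextendableSizes hne hproper
  obtain ⟨pf, -, hcard⟩ := Nat.sInf_mem (unextendableSizes_nonempty hproper)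
  have hle : sInf (unextendableSizes C) ≤ n := hcard ▸ domCard_le pf
  ext k
  simp only [Set.mem_ofPred_eq, Set.mem_Iic]
  constructor
  · rintro ⟨⟨U, hU⟩, hshat⟩
    by_contra! hlt
    have hkn : k ≤ n := by simpa [← hU] using card_le_univ U
    obtain ⟨V, hV, hnot⟩ := exists_card_eq_not_shatters hproper (by omega) hkn
    exact hnot (hshat V hV)
  · intro hk
    obtain ⟨U, -, hU⟩ :=
      exists_subset_card_eq (s := (univ : Finset (Fin n))) (n := k) (by rw [card_fin]; omega)
    exact ⟨⟨U, hU⟩, fun V hV => shatters_of_card_lt (by omega)⟩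

end MinimalUnextendable

theorem vc_radius_eq_min_extenture_size_sub_one_general {n : ℕ}
    (C : Set (Fin n → Fin 2)) (hne : C.Nonempty) (hproper : C ≠ Set.univ) :
    (∃ pf : Fin n → Option (Fin 2), IsExtenture C pf) ∧
    sSup {k : ℕ | (∃ U : Finset (Fin n), U.card = k) ∧
        ∀ U : Finset (Fin n), U.card = k → Shatters C U} + 1
      = sInf {k : ℕ | ∃ pf : Fin n → Option (Fin 2), IsExtenture C pf ∧ domCard pf = k} := by
  obtain ⟨pf, hpf, hcard⟩ := Nat.sInf_mem (unextendableSizes_nonempty hproper)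
  refine ⟨⟨pf, isExtenture_of_domCard_eq_sInf hpf hcard⟩, ?_⟩
  rw [shatteredSizes_eq_Iic hne hproper, sInf_extentureSizes_eq hproper, csSup_Iic]
  have := one_le_sInf_unextendableSizes hne hproper
  omega

/-- For a nonempty proper class `C ⊆ [n → 2]`, extentures exist and the VC radius of `C`
(the largest `k` such that every subset of size `k` is shattered) equals the minimum
domain size of an extenture of `C`, minus one. -/
theorem vc_radius_eq_min_extenture_size_sub_one {n : ℕ} (hn : 1 ≤ n)
    (C : Set (Fin n → Fin 2)) (hne : C.Nonempty) (hproper : C ≠ Set.univ) :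
    (∃ pf : Fin n → Option (Fin 2), IsExtenture C pf) ∧
    sSup {k : ℕ | (∃ U : Finset (Fin n), U.card = k) ∧
        ∀ U : Finset (Fin n), U.card = k → Shatters C U} + 1
      = sInf {k : ℕ | ∃ pf : Fin n → Option (Fin 2), IsExtenture C pf ∧ domCard pf = k} :=
  vc_radius_eq_min_extenture_size_sub_one_general C hne hproper
end

section
/- Let 𝕜 be a field, n ≥ 1, and let D be a full class of functions [n] → [m], i.e. for every u ∈ [n] and every v ∈ [m] some h ∈ D has h(u) = v. Fix f : [n] → [m] and let J = Ideal.span { ∏_{(u,i) : ¬(f(u) = i ∧ h(u) = i)} x_{u,i} : h ∈ D } ⊆ S (the canonical ideal of the partial class {f ∩ h : h ∈ D}). Then J is a principal ideal if and only if f ∈ D, and in that case J = Ideal.span {x^{Γf}}. -/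
open MvPolynomial

/-- The monomial `x^{Γf} = ∏_{(u,i) : f(u) ≠ i} x_{u,i}`. -/
noncomputable def xGamma (𝕜 : Type) [Field 𝕜] {n m : ℕ} (f : Fin n → Fin m) :
    MvPolynomial (Fin n × Fin m) 𝕜 :=
  ∏ p ∈ Finset.univ.filter (fun p : Fin n × Fin m => f p.1 ≠ p.2), X p

/-- The canonical ideal of the partial class `{f ∩ h : h ∈ D}`, generated by the
monomials `x^{Γ(f ∩ h)}`. -/
noncomputable def capIdeal (𝕜 : Type) [Field 𝕜] {n m : ℕ} (D : Set (Fin n → Fin m))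
    (f : Fin n → Fin m) : Ideal (MvPolynomial (Fin n × Fin m) 𝕜) :=
  Ideal.span {P | ∃ h ∈ D,
    P = ∏ p ∈ Finset.univ.filter
        (fun p : Fin n × Fin m => ¬(f p.1 = p.2 ∧ h p.1 = p.2)), X p}

/-!
Every generator `x^{Γ(f ∩ h)}` is a multiple of `x^{Γf}`, which is itself a generator when
`f ∈ D`. Conversely, if the ideal is `(P)`, then `P` divides the generators for functions
`h_u ∈ D` with `h_u(u) = f(u)`; these exponent sets meet in `Γf`, so the leading exponent of `P`
for any monomial order is at most `Γf`. As `P` lies in a monomial ideal, that exponent also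
dominates some `Γ(f ∩ h)`, hence `Γ(f ∩ h) ⊆ Γf`, which forces `h = f`.
-/

section MonomialDivisibility

variable {σ R : Type*}

theorem prod_X_eq_monomial_indicator [CommSemiring R] (A : Finset σ) :
    ∏ p ∈ A, (X p : MvPolynomial σ R) = monomial (Finsupp.indicator A fun _ _ => 1) 1 := by
  simpa using prod_X_pow (R := R) (fun _ => 1) A

theorem Finsupp.indicator_one_le_indicator_one_iff {A B : Finset σ} :
    (Finsupp.indicator A fun _ _ => 1 : σ →₀ ℕ) ≤ Finsupp.indicator B (fun _ _ => 1) ↔ A ⊆ B := by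
  classical
  refine ⟨fun h p hp => ?_, fun h p => ?_⟩
  · by_contra hpB
    simpa [Finsupp.indicator_apply, hp, hpB] using h p
  · by_cases hp : p ∈ A
    · simp [Finsupp.indicator_apply, hp, h hp]
    · simp [Finsupp.indicator_apply, hp]

theorem MonomialOrder.degree_le_of_dvd_monomial [CommRing R] [IsDomain R] (ord : MonomialOrder σ)
    {P : MvPolynomial σ R} {s : σ →₀ ℕ} {a : R} (ha : a ≠ 0) (h : P ∣ monomial s a) :
    ord.degree P ≤ s := by
  classical
  obtain ⟨Q, hQ⟩ := h
  have hPQ : P * Q ≠ 0 := hQ ▸ (monomial_eq_zero.not.2 ha)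
  have hs : s = ord.degree P + ord.degree Q := by
    rw [← ord.degree_mul (left_ne_zero_of_mul hPQ) (right_ne_zero_of_mul hPQ), ← hQ,
      ord.degree_monomial, if_neg ha]
  exact hs ▸ le_self_add

theorem exists_mem_support_forall_le_of_dvd_monomial [Finite σ] [CommRing R] [IsDomain R]
    {P : MvPolynomial σ R} (hP : P ≠ 0) :
    ∃ d ∈ P.support, ∀ (s : σ →₀ ℕ) (a : R), a ≠ 0 → P ∣ monomial s a → d ≤ s := by
  obtain ⟨k, ⟨e⟩⟩ := Finite.exists_equiv_fin σ
  let _ : LinearOrder σ := LinearOrder.lift' e e.injective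
  let ord : MonomialOrder σ := MonomialOrder.lex
  exact ⟨ord.degree P, ord.degree_mem_support hP, fun _ _ ha => ord.degree_le_of_dvd_monomial ha⟩

end MonomialDivisibility

section GraphIntersection

variable {α β : Type*} [Fintype α] [Fintype β] [DecidableEq β]

/-- The complement of the graph of `f ∩ h`, the exponent set of `x^{Γ(f ∩ h)}`. -/
def graphInterCompl (f h : α → β) : Finset (α × β) :=
  Finset.univ.filter fun p => ¬(f p.1 = p.2 ∧ h p.1 = p.2)

theorem graphInterCompl_self_subset (f h : α → β) :
    graphInterCompl f f ⊆ graphInterCompl f h := by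
  intro p
  simp +contextual [graphInterCompl]

theorem eq_of_graphInterCompl_subset {f h : α → β}
    (hsub : graphInterCompl f h ⊆ graphInterCompl f f) : h = f := by
  funext u
  by_contra hne
  simpa [graphInterCompl, hne] using @hsub (u, f u)

theorem mem_graphInterCompl_iff_of_apply_eq {f h : α → β} {p : α × β} (hp : h p.1 = f p.1) :
    p ∈ graphInterCompl f h ↔ p ∈ graphInterCompl f f := by
  simp [graphInterCompl, hp]

end GraphIntersection

section CapIdeal

variable {𝕜 : Type} [Field 𝕜] {n m : ℕ} {D : Set (Fin n → Fin m)} {f : Fin n → Fin m}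

theorem xGamma_eq_prod_X : xGamma 𝕜 f = ∏ p ∈ graphInterCompl f f, X p := by
  simp [xGamma, graphInterCompl]

theorem capIdeal_eq_span_prod_X :
    capIdeal 𝕜 D f = Ideal.span ((fun h => ∏ p ∈ graphInterCompl f h, X p) '' D) := by
  simp only [capIdeal, graphInterCompl, Set.image, eq_comm]

theorem capIdeal_eq_span_monomial :
    capIdeal 𝕜 D f = Ideal.span ((fun s => monomial s 1) ''
      ((fun h => Finsupp.indicator (graphInterCompl f h) fun _ _ => 1) '' D)) := by
  simp only [capIdeal_eq_span_prod_X, prod_X_eq_monomial_indicator, Set.image_image]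

theorem capIdeal_eq_span_xGamma (hf : f ∈ D) : capIdeal 𝕜 D f = Ideal.span {xGamma 𝕜 f} := by
  refine le_antisymm ?_ ?_
  · rw [capIdeal_eq_span_prod_X, Ideal.span_le]
    rintro _ ⟨h, -, rfl⟩
    rw [SetLike.mem_coe, Ideal.mem_span_singleton, xGamma_eq_prod_X]
    exact Finset.prod_dvd_prod_of_subset _ _ _ (graphInterCompl_self_subset f h)
  · rw [Ideal.span_singleton_le_iff_mem, capIdeal_eq_span_prod_X, xGamma_eq_prod_X]
    exact Ideal.subset_span ⟨f, hf, rfl⟩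

theorem mem_of_isPrincipal_capIdeal (hn : 1 ≤ n)
    (hfull : ∀ u : Fin n, ∀ v : Fin m, ∃ h ∈ D, h u = v) (hJ : (capIdeal 𝕜 D f).IsPrincipal) :
    f ∈ D := by
  classical
  let ind : Finset (Fin n × Fin m) → (Fin n × Fin m →₀ ℕ) := fun A =>
    Finsupp.indicator A fun _ _ => 1
  obtain ⟨P, hP⟩ := hJ
  rw [Ideal.submodule_span_eq, capIdeal_eq_span_monomial] at hP
  choose g hgD hgf using fun u => hfull u (f u)
  have hdvd (u : Fin n) : P ∣ monomial (ind (graphInterCompl f (g u))) (1 : 𝕜) := by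
    rw [← Ideal.mem_span_singleton, ← hP]
    exact Ideal.subset_span ⟨_, ⟨g u, hgD u, rfl⟩, rfl⟩
  have hP0 : P ≠ 0 := ne_zero_of_dvd_ne_zero (monomial_eq_zero.not.2 one_ne_zero) (hdvd ⟨0, hn⟩)
  obtain ⟨d, hdP, hd⟩ := exists_mem_support_forall_le_of_dvd_monomial hP0
  -- `g p.1` agrees with `f` at `p.1`, so the exponent sets of the generators for `g` meet in `Γf`.
  have hdeg : d ≤ ind (graphInterCompl f f) := fun p => by
    calc d p ≤ ind (graphInterCompl f (g p.1)) p := hd _ 1 one_ne_zero (hdvd p.1) p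
      _ = ind (graphInterCompl f f) p := by
          simp only [ind, Finsupp.indicator_apply, mem_graphInterCompl_iff_of_apply_eq (hgf p.1)]
  obtain ⟨_, ⟨h, hD, rfl⟩, hle⟩ := mem_ideal_span_monomial_image.1
    (hP ▸ Ideal.mem_span_singleton_self P) d hdP
  rwa [← eq_of_graphInterCompl_subset
    (Finsupp.indicator_one_le_indicator_one_iff.1 (hle.trans hdeg))]

end CapIdeal

/-- For a full class `D`, the canonical ideal of `{f ∩ h : h ∈ D}` is principal iff
`f ∈ D`, in which case it is generated by `x^{Γf}`. -/
theorem capIdeal_principal_iff_mem (𝕜 : Type) [Field 𝕜] {n m : ℕ} (hn : 1 ≤ n)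
    (D : Set (Fin n → Fin m)) (hfull : ∀ u : Fin n, ∀ v : Fin m, ∃ h ∈ D, h u = v)
    (f : Fin n → Fin m) :
    ((capIdeal 𝕜 D f).IsPrincipal ↔ f ∈ D) ∧
    (f ∈ D → capIdeal 𝕜 D f = Ideal.span {xGamma 𝕜 f}) :=
  ⟨⟨mem_of_isPrincipal_capIdeal hn hfull, fun hf => ⟨⟨xGamma 𝕜 f, capIdeal_eq_span_xGamma hf⟩⟩⟩,
    capIdeal_eq_span_xGamma⟩
end
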